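/- Let G be the group presented by ⟨a, s, t | a² = 1, [a, t⁻¹at] = 1, [s,t] = 1, s⁻¹as = a·(t⁻¹at)⟩, and let N be the subgroup of G generated by the set {s⁻ⁱ a sⁱ : i < 0} ∪ {t⁻ʲ a tʲ : j ∈ ℤ}. Then N is abelian and every element x of N satisfies x² = 1; that is, N is an elementary abelian 2-group. -/
import Mathlib


/-- The three generators `a`, `s`, `t`. -/
inductive Gen : Type
  | a | s | t

/-- The relators of the presentation
`⟨a, s, t | a² = 1, [a, t⁻¹at] = 1, [s,t] = 1, s⁻¹as = a·(t⁻¹at)⟩`,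
where `[x,y] = x⁻¹y⁻¹xy`. -/
def rels : Set (FreeGroup Gen) :=
  { (FreeGroup.of Gen.a) ^ 2,
    (FreeGroup.of Gen.a)⁻¹ *
        ((FreeGroup.of Gen.t)⁻¹ * FreeGroup.of Gen.a * FreeGroup.of Gen.t)⁻¹ *
        FreeGroup.of Gen.a *
        ((FreeGroup.of Gen.t)⁻¹ * FreeGroup.of Gen.a * FreeGroup.of Gen.t),
    (FreeGroup.of Gen.s)⁻¹ * (FreeGroup.of Gen.t)⁻¹ * FreeGroup.of Gen.s * FreeGroup.of Gen.t,
    ((FreeGroup.of Gen.s)⁻¹ * FreeGroup.of Gen.a * FreeGroup.of Gen.s)⁻¹ *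
        (FreeGroup.of Gen.a *
          ((FreeGroup.of Gen.t)⁻¹ * FreeGroup.of Gen.a * FreeGroup.of Gen.t)) }

/-- The group `G` of the paper. -/
abbrev G := PresentedGroup rels

def a : G := PresentedGroup.of Gen.a
def s : G := PresentedGroup.of Gen.s
def t : G := PresentedGroup.of Gen.t

section helpers
variable {H : Type*} [Group H]

/-- conjugation -/
def cj (u x : H) : H := u⁻¹ * x * u

lemma cj_cj (u v x : H) : cj v (cj u x) = cj (u * v) x := by
  simp only [cj]; group

lemma cj_one (x : H) : cj 1 x = x := by simp [cj]

lemma cj_one' (u : H) : cj u 1 = 1 := by simp [cj]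

lemma cj_mul (u x y : H) : cj u (x * y) = cj u x * cj u y := by
  simp only [cj]; group

lemma Commute.cjc {x y : H} (u : H) (h : Commute x y) : Commute (cj u x) (cj u y) := by
  have : cj u (x * y) = cj u (y * x) := by rw [h.eq]
  rw [cj_mul, cj_mul] at this
  exact this

lemma cj_sq (u x : H) : (cj u x) ^ 2 = cj u (x ^ 2) := by
  simp only [cj, sq]; group

lemma closure_comm {S : Set H} (h : ∀ x ∈ S, ∀ y ∈ S, Commute x y) :
    ∀ x ∈ Subgroup.closure S, ∀ y ∈ Subgroup.closure S, Commute x y := by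
  intro x hx y hy
  refine Subgroup.closure_induction₂ (fun x y hx hy => h x hx y hy) ?_ ?_ ?_ ?_ ?_ ?_ hx hy
  · intro x _; exact Commute.one_left x
  · intro x _; exact Commute.one_right x
  · intro x y z _ _ _ h1 h2; exact h1.mul_left h2
  · intro x y z _ _ _ h1 h2; exact h1.mul_right h2
  · intro x y _ _ h1; exact h1.inv_left
  · intro x y _ _ h1; exact h1.inv_right

lemma four_lemma (B0 B1 Bn1 Bn2 : H)
    (h0n1 : Commute B0 Bn1) (h1n1 : Commute B1 Bn1) (h1n2 : Commute B1 Bn2)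
    (HH : Commute (B0 * B1) (Bn1 * Bn2)) : Commute B0 Bn2 := by
  have e1 : B0 * B1 * (Bn1 * Bn2) = Bn1 * (B0 * B1 * Bn2) := by
    rw [show B0 * B1 * (Bn1 * Bn2) = B0 * (B1 * Bn1) * Bn2 by group, h1n1.eq,
      show B0 * (Bn1 * B1) * Bn2 = B0 * Bn1 * (B1 * Bn2) by group, h0n1.eq]
    group
  have e2 : Bn1 * Bn2 * (B0 * B1) = Bn1 * (Bn2 * (B0 * B1)) := by group
  have hH := HH.eq
  rw [e1, e2] at hH
  have key : Commute (B0 * B1) Bn2 := mul_left_cancel hH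
  have := key.mul_left h1n2.inv_left
  simpa using this
end helpers

lemma rel_one {r : FreeGroup Gen} (h : r ∈ rels) : PresentedGroup.mk rels r = 1 :=
  (QuotientGroup.eq_one_iff _).mpr (Subgroup.subset_normalClosure h)

lemma rel1 : a ^ 2 = 1 := by
  have := rel_one (r := (FreeGroup.of Gen.a) ^ 2) (by left; rfl)
  simpa [a, PresentedGroup.of, map_pow] using this

lemma rel2 : Commute a (cj t a) := by
  have h : a⁻¹ * (t⁻¹ * a * t)⁻¹ * a * (t⁻¹ * a * t) = 1 := by
    have := rel_one (r := (FreeGroup.of Gen.a)⁻¹ *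
        ((FreeGroup.of Gen.t)⁻¹ * FreeGroup.of Gen.a * FreeGroup.of Gen.t)⁻¹ *
        FreeGroup.of Gen.a *
        ((FreeGroup.of Gen.t)⁻¹ * FreeGroup.of Gen.a * FreeGroup.of Gen.t)) (by right; left; rfl)
    simp only [map_mul, map_inv] at this
    exact this
  have h2 : ((t⁻¹ * a * t) * a)⁻¹ * (a * (t⁻¹ * a * t)) = 1 := by
    rw [show ((t⁻¹ * a * t) * a)⁻¹ * (a * (t⁻¹ * a * t)) =
      a⁻¹ * (t⁻¹ * a * t)⁻¹ * a * (t⁻¹ * a * t) by group]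
    exact h
  have := (inv_mul_eq_one.mp h2).symm
  simpa [cj, Commute, SemiconjBy, mul_assoc] using this

lemma rel3 : Commute s t := by
  have h : s⁻¹ * t⁻¹ * s * t = 1 := by
    have := rel_one (r := (FreeGroup.of Gen.s)⁻¹ * (FreeGroup.of Gen.t)⁻¹ *
        FreeGroup.of Gen.s * FreeGroup.of Gen.t) (by right; right; left; rfl)
    simp only [map_mul, map_inv] at this
    exact this
  have h2 : (t * s)⁻¹ * (s * t) = 1 := by
    rw [show (t * s)⁻¹ * (s * t) = s⁻¹ * t⁻¹ * s * t by group]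
    exact h
  exact (inv_mul_eq_one.mp h2).symm

lemma rel4 : cj s a = a * cj t a := by
  have h : (s⁻¹ * a * s)⁻¹ * (a * (t⁻¹ * a * t)) = 1 := by
    have := rel_one (r := ((FreeGroup.of Gen.s)⁻¹ * FreeGroup.of Gen.a * FreeGroup.of Gen.s)⁻¹ *
        (FreeGroup.of Gen.a *
          ((FreeGroup.of Gen.t)⁻¹ * FreeGroup.of Gen.a * FreeGroup.of Gen.t))) (by
            right; right; right; rfl)
    simp only [map_mul, map_inv] at this
    exact this
  have := inv_mul_eq_one.mp h
  simpa [cj] using this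

/-- the conjugates of `a` by powers of `t` -/
noncomputable def b (j : ℤ) : G := cj (t ^ j) a

lemma b_zero : b 0 = a := by simp [b, cj_one]

lemma cj_t_b (j : ℤ) : cj t (b j) = b (j + 1) := by
  rw [b, cj_cj, ← zpow_add_one, b]

lemma cj_tpow_b (j k : ℤ) : cj (t ^ j) (b k) = b (k + j) := by
  rw [b, cj_cj, ← zpow_add, b]

lemma st_comm (i j : ℤ) : s ^ i * t ^ j = t ^ j * s ^ i := (rel3.zpow_zpow i j).eq

lemma cj_s_a : cj s a = a * b 1 := by rw [rel4, b, zpow_one]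

/-- conjugation by `s` on conjugates of `a` by powers of `s` -/
lemma st_comm1 (i : ℤ) : s ^ i * t = t * s ^ i := by
  simpa using st_comm i 1

lemma ts_comm1 (j : ℤ) : s * t ^ j = t ^ j * s := by
  simpa using st_comm 1 j

lemma cj_s_step (i : ℤ) : cj s (cj (s ^ i) a) = cj (s ^ i) a * cj t (cj (s ^ i) a) := by
  have h1 : cj s (cj (s ^ i) a) = cj (s ^ i) (cj s a) := by
    rw [cj_cj, cj_cj, ← zpow_one_add, ← zpow_add_one, add_comm]
  rw [h1, cj_s_a, cj_mul]
  congr 1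
  rw [b, zpow_one, cj_cj, cj_cj, st_comm1]

lemma cj_s_b (j : ℤ) : cj s (b j) = b j * b (j + 1) := by
  have h1 : cj s (b j) = cj (t ^ j) (cj s a) := by
    rw [b, cj_cj, cj_cj, ts_comm1]
  rw [h1, cj_s_a, cj_mul, cj_tpow_b, ← b, add_comm]

lemma comm_shift {p q : ℤ} (j : ℤ) (h : Commute (b p) (b q)) :
    Commute (b (p + j)) (b (q + j)) := by
  have := h.cjc (t ^ j)
  rwa [cj_tpow_b, cj_tpow_b] at this

lemma hb0 : ∀ n : ℕ, Commute (b 0) (b n) := by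
  intro n
  induction n using Nat.strong_induction_on with
  | _ n IH =>
    match n, IH with
    | 0, _ => exact Commute.refl _
    | 1, _ =>
      have h := rel2
      have h1 : b (1 : ℤ) = cj t a := by rw [b, zpow_one]
      rw [← h1, ← b_zero] at h
      exact_mod_cast h
    | (n+2), IH =>
      have IHgap : ∀ (j : ℤ) (m : ℕ), m < n + 2 → Commute (b j) (b (j + (m : ℤ))) := by
        intro j m hm
        simpa [add_comm] using comm_shift j (IH m hm)
      have h01 : Commute (b 0) (b (1 : ℤ)) := by simpa using IHgap 0 1 (by omega)
      have h0n1 : Commute (b 0) (b ((n : ℤ) + 1)) := by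
        convert IHgap 0 (n + 1) (by omega) using 2 <;> (push_cast; ring)
      have h1n1 : Commute (b (1 : ℤ)) (b ((n : ℤ) + 1)) := by
        convert IHgap 1 n (by omega) using 2 <;> (push_cast; ring)
      have h1n2 : Commute (b (1 : ℤ)) (b ((n : ℤ) + 2)) := by
        convert IHgap 1 (n + 1) (by omega) using 2 <;> (push_cast; ring)
      have H : Commute (b 0 * b (1 : ℤ)) (b ((n : ℤ) + 1) * b ((n : ℤ) + 2)) := by
        have h := h0n1.cjc s
        rw [cj_s_b, cj_s_b] at h
        have e : (n : ℤ) + 1 + 1 = (n : ℤ) + 2 := by ring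
        rwa [zero_add, e] at h
      have final := four_lemma _ _ _ _ h0n1 h1n1 h1n2 H
      convert final using 2 <;> (push_cast; ring)

lemma hbZ (j k : ℤ) : Commute (b j) (b k) := by
  rcases le_total j k with h | h
  · obtain ⟨m, rfl⟩ : ∃ m : ℕ, k = j + m := ⟨(k - j).toNat, by omega⟩
    have := comm_shift j (hb0 m)
    simpa [add_comm] using this
  · obtain ⟨m, rfl⟩ : ∃ m : ℕ, j = k + m := ⟨(j - k).toNat, by omega⟩
    have := comm_shift k (hb0 m)
    simpa [add_comm] using this.symm

/-- generators at level n -/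
def Tset (n : ℕ) : Set G := {x | ∃ j : ℤ, x = cj (s ^ (-(n : ℤ)) * t ^ j) a}

noncomputable def T (n : ℕ) : Subgroup G := Subgroup.closure (Tset n)

lemma gen_eq (i j : ℤ) : cj (s ^ i * t ^ j) a = cj (s ^ i) (b j) := by
  rw [b, cj_cj, st_comm]

lemma Tset_comm (n : ℕ) : ∀ x ∈ Tset n, ∀ y ∈ Tset n, Commute x y := by
  rintro x ⟨j, rfl⟩ y ⟨k, rfl⟩
  rw [gen_eq, gen_eq]
  exact (hbZ j k).cjc _

lemma T_comm (n : ℕ) : ∀ x ∈ T n, ∀ y ∈ T n, Commute x y :=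
  closure_comm (Tset_comm n)

lemma memT (n : ℕ) : ∀ (k : ℕ) (j : ℤ), cj (s ^ ((k : ℤ) - n) * t ^ j) a ∈ T n := by
  intro k
  induction k with
  | zero =>
    intro j
    exact Subgroup.subset_closure ⟨j, by norm_num⟩
  | succ k IH =>
    intro j
    have hy : cj (s ^ (((k : ℤ) + 1) - n)) a = cj (s ^ ((k : ℤ) - n)) a *
        cj t (cj (s ^ ((k : ℤ) - n)) a) := by
      rw [show ((k : ℤ) + 1) - n = ((k : ℤ) - n) + 1 by ring, zpow_add_one, ← cj_cj]
      exact cj_s_step _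
    have harg : t * t ^ j = t ^ (j + 1) := by
      rw [← zpow_one_add t j, add_comm (1 : ℤ) j]
    have expand : cj (s ^ (((k : ℕ) + 1 : ℤ) - n) * t ^ j) a =
        cj (s ^ ((k : ℤ) - n) * t ^ j) a * cj (s ^ ((k : ℤ) - n) * t ^ (j + 1)) a := by
      rw [← cj_cj, hy, cj_mul, cj_cj, cj_cj, cj_cj, harg]
    have h1 : ((k + 1 : ℕ) : ℤ) - (n : ℤ) = ((k : ℕ) + 1 : ℤ) - n := by push_cast; ring
    rw [h1, expand]
    exact mul_mem (IH j) (IH (j + 1))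

/-- The subgroup of `G` generated by the conjugates `s⁻ⁱ a sⁱ` (`i < 0`) and
`t⁻ʲ a tʲ` (`j ∈ ℤ`) is an elementary abelian 2-group: it is abelian and every element
squares to the identity. -/
theorem lampstand_subgroup_elementary_abelian :
    let N : Subgroup G := Subgroup.closure
      ({x | ∃ i : ℤ, i < 0 ∧ x = (s ^ i)⁻¹ * a * s ^ i} ∪
       {x | ∃ j : ℤ, x = (t ^ j)⁻¹ * a * t ^ j})
    (∀ x ∈ N, ∀ y ∈ N, x * y = y * x) ∧ (∀ x ∈ N, x ^ 2 = 1) := by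
  intro N
  set S : Set G := ({x | ∃ i : ℤ, i < 0 ∧ x = (s ^ i)⁻¹ * a * s ^ i} ∪
       {x | ∃ j : ℤ, x = (t ^ j)⁻¹ * a * t ^ j}) with hS
  -- every generator has the form cj (s^i * t^j) a with i ≤ 0
  have hform : ∀ x ∈ S, ∃ i j : ℤ, i ≤ 0 ∧ x = cj (s ^ i * t ^ j) a := by
    rintro x (⟨i, hi, rfl⟩ | ⟨j, rfl⟩)
    · exact ⟨i, 0, le_of_lt hi, by rw [gen_eq, b_zero]; rfl⟩
    · exact ⟨0, j, le_refl 0, by rw [gen_eq, zpow_zero, cj_one, b]; rfl⟩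
  have hcomm : ∀ x ∈ S, ∀ y ∈ S, Commute x y := by
    intro x hx y hy
    obtain ⟨i, j, hi, rfl⟩ := hform x hx
    obtain ⟨i', j', hi', rfl⟩ := hform y hy
    set n : ℕ := (max (-i) (-i')).toNat with hn
    have hxm : cj (s ^ i * t ^ j) a ∈ T n := by
      have h1 : i = (((i + n).toNat : ℤ)) - n := by omega
      rw [h1]; exact memT n _ j
    have hym : cj (s ^ i' * t ^ j') a ∈ T n := by
      have h1 : i' = (((i' + n).toNat : ℤ)) - n := by omega
      rw [h1]; exact memT n _ j'
    exact T_comm n _ hxm _ hym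
  have hNcomm : ∀ x ∈ N, ∀ y ∈ N, x * y = y * x := fun x hx y hy =>
    (closure_comm hcomm x hx y hy).eq
  refine ⟨hNcomm, ?_⟩
  -- squares
  have hgen_sq : ∀ x ∈ S, x ^ 2 = 1 := by
    intro x hx
    obtain ⟨i, j, _, rfl⟩ := hform x hx
    rw [cj_sq, rel1, cj_one']
  intro x hx
  refine Subgroup.closure_induction (p := fun x _ => x ^ 2 = 1) hgen_sq (one_pow 2) ?_ ?_ hx
  · intro x y hxm hym hx2 hy2
    have hcxy : Commute x y := closure_comm hcomm x hxm y hym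
    rw [hcxy.mul_pow, hx2, hy2, one_mul]
  · intro x _ hx2
    rw [inv_pow, hx2, inv_one]
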